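/- arXiv:1208.2579 — 7 statements merged into one kernel-verified Lean document; each statement's English description precedes it below -/
import Mathlib

section
/- Let λ be an infinite cardinal, I a set of cardinality λ, D a λ-regular ultrafilter on I, and f : I → ℕ a D-nonstandard function. If D is λ-regular below f, i.e. there is a family ⟨X_i : i < λ⟩ of members of D such that |{i < λ : t ∈ X_i}| ≤ f(t) for every t ∈ I, then the set of D-equivalence classes of functions g on I with g(t) < 2^{f(t)} for every t ∈ I has cardinality exactly 2^λ. -/
open Cardinal Set

universe u

/-- `A = ∅ mod D`: the complement of `A` belongs to the filter `D`. -/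
def ZeroMod {I : Type u} (D : Filter I) (A : Set I) : Prop := Aᶜ ∈ D

/-- `A ≠ ∅ mod D`: the complement of `A` does not belong to the filter `D`. -/
def NonzeroMod {I : Type u} (D : Filter I) (A : Set I) : Prop := Aᶜ ∉ D

/-- `A ⊆ B mod D`. -/
def SubsetMod {I : Type u} (D : Filter I) (A B : Set I) : Prop := ZeroMod D (A \ B)

/-- `A = B mod D`. -/
def EqMod {I : Type u} (D : Filter I) (A B : Set I) : Prop := SubsetMod D A B ∧ SubsetMod D B A

/-- `D` is a `lam`-regular filter on `I`: there is a family `⟨X i : i < lam⟩` of members of `D`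
such that every `t ∈ I` belongs to only finitely many of the `X i`. -/
def IsRegularFilter {I : Type u} (lam : Cardinal.{u}) (D : Filter I) : Prop :=
  ∃ X : Ordinal.{u} → Set I, (∀ i, i < lam.ord → X i ∈ D) ∧
    ∀ t : I, {i : Ordinal.{u} | i < lam.ord ∧ t ∈ X i}.Finite

/-- `f : I → ℕ` is `D`-nonstandard. -/
def IsNonstandard {I : Type u} (D : Filter I) (f : I → ℕ) : Prop := ∀ n : ℕ, {t | n < f t} ∈ D

/-- `f <_D g`. -/
def ltD {I : Type u} (D : Filter I) (f g : I → ℕ) : Prop := {t | f t < g t} ∈ D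

/-- `f ≤_D g`. -/
def leD {I : Type u} (D : Filter I) (f g : I → ℕ) : Prop := {t | f t ≤ g t} ∈ D

/-- Flexibility for a family of sets (e.g. `D.sets`): for every nonstandard `f` there is a
`theta`-indexed family of members below `f`. -/
def IsFlexibleSets {I : Type u} (theta : Cardinal.{u}) (F : Set (Set I)) : Prop :=
  ∀ f : I → ℕ, (∀ n : ℕ, {t | n < f t} ∈ F) →
    ∃ X : Ordinal.{u} → Set I, (∀ α, α < theta.ord → X α ∈ F) ∧
      ∀ t : I, #{α : Ordinal.{u} // α < theta.ord ∧ t ∈ X α} ≤ (f t : Cardinal)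

/-- `D` is a `theta`-flexible filter. -/
def IsFlexible {I : Type u} (theta : Cardinal.{u}) (D : Filter I) : Prop :=
  IsFlexibleSets theta D.sets

/-- `F` (e.g. the sets of a filter) is `mu⁺`-good: every monotonic map from finite subsets of `mu`
into `F` has a multiplicative refinement. Finite subsets of `mu` are represented as finite sets of
ordinals `< mu.ord`. -/
def IsGoodSets {I : Type u} (mu : Cardinal.{u}) (F : Set (Set I)) : Prop :=
  ∀ f : Finset Ordinal.{u} → Set I,
    (∀ u : Finset Ordinal.{u}, ↑u ⊆ Set.Iio mu.ord → f u ∈ F) →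
    (∀ u v : Finset Ordinal.{u}, ↑v ⊆ Set.Iio mu.ord → u ⊆ v → f v ⊆ f u) →
    ∃ f' : Finset Ordinal.{u} → Set I,
      (∀ u, ↑u ⊆ Set.Iio mu.ord → f' u ∈ F) ∧
      (∀ u, ↑u ⊆ Set.Iio mu.ord → f' u ⊆ f u) ∧
      ∀ u v, ↑u ⊆ Set.Iio mu.ord → ↑v ⊆ Set.Iio mu.ord → f' u ∩ f' v = f' (u ∪ v)

/-- The filter `D` is `mu⁺`-good. -/
def IsGoodFilter {I : Type u} (mu : Cardinal.{u}) (D : Filter I) : Prop := IsGoodSets mu D.sets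

/-- An element of `FIN(G)`: a function whose domain is a finite subset of `G`, with
`h(g) ∈ range(g)` for each `g` in the domain. Functions in `G` take ordinal values. -/
structure PartialAssignment (I : Type u) (G : Set (I → Ordinal.{u})) where
  dom : Finset (I → Ordinal.{u})
  dom_sub : ↑dom ⊆ G
  val : (I → Ordinal.{u}) → Ordinal.{u}
  val_mem : ∀ g ∈ dom, val g ∈ Set.range g

/-- The set `A_h = {t ∈ I : g(t) = h(g) for all g ∈ dom h}`. -/
def PartialAssignment.Aset {I : Type u} {G : Set (I → Ordinal.{u})}
    (h : PartialAssignment I G) : Set I :=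
  {t | ∀ g ∈ h.dom, g t = h.val g}

/-- `G` is independent mod `D`: `A_h ≠ ∅ mod D` for every `h ∈ FIN(G)`. -/
def IndependentMod {I : Type u} (D : Filter I) (G : Set (I → Ordinal.{u})) : Prop :=
  ∀ h : PartialAssignment I G, NonzeroMod D h.Aset

/-- `(I, D, G)` is a `(lam, mu)`-pre-good triple: `|I| = lam`, `D` is a `lam`-regular filter,
`G` is a family of functions from `I` to `mu` (ordinals `< mu.ord`), independent mod `D`. -/
def IsPreGoodTriple {I : Type u} (lam mu : Cardinal.{u}) (D : Filter I)
    (G : Set (I → Ordinal.{u})) : Prop :=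
  #I = lam ∧ IsRegularFilter lam D ∧ (∀ g ∈ G, ∀ t : I, g t < mu.ord) ∧ IndependentMod D G

/-- `(I, D, G)` is a `(lam, mu)`-good triple: pre-good and `D` maximal among filters modulo which
`G` is independent. -/
def IsGoodTriple {I : Type u} (lam mu : Cardinal.{u}) (D : Filter I)
    (G : Set (I → Ordinal.{u})) : Prop :=
  IsPreGoodTriple lam mu D G ∧
    ∀ D' : Filter I, (∀ A ∈ D, A ∈ D') → IndependentMod D' G → D' = D

/-- `A` is supported by `G` mod `D`: there is a partition of `I` into sets of the form `A_h`,
`h ∈ FIN(G)`, each of which is `⊆ A mod D` or disjoint from `A mod D`. -/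
def SupportedBy {I : Type u} (D : Filter I) (G : Set (I → Ordinal.{u})) (A : Set I) : Prop :=
  ∃ P : Set (Set I),
    (∀ X ∈ P, ∃ h : PartialAssignment I G, X = h.Aset) ∧
    (∀ X ∈ P, ∀ Y ∈ P, X ≠ Y → X ∩ Y = ∅) ∧
    ⋃₀ P = Set.univ ∧
    ∀ X ∈ P, SubsetMod D X A ∨ ZeroMod D (X ∩ A)

/-- `R` is the edge relation of a model of the random graph with vertex set `mu`
(identified with the ordinals `< mu.ord`). -/
def IsRandomGraphOn (mu : Cardinal.{u}) (R : Ordinal.{u} → Ordinal.{u} → Prop) : Prop :=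
  (∀ a b, a < mu.ord → b < mu.ord → (R a b ↔ R b a)) ∧
  (∀ a, a < mu.ord → ¬ R a a) ∧
  ∀ U V : Finset Ordinal.{u}, ↑U ⊆ Set.Iio mu.ord → ↑V ⊆ Set.Iio mu.ord → Disjoint U V →
    ∃ x, x < mu.ord ∧ (∀ a ∈ U, R x a) ∧ ∀ b ∈ V, ¬ R x b

/-- An ordinal `γ = β + n` (`β` limit or zero, `n < ω`) is even iff `n` is even,
equivalently iff `γ = 2·δ` for some ordinal `δ`. -/
def EvenOrdinal (γ : Ordinal.{u}) : Prop := ∃ δ : Ordinal.{u}, γ = 2 * δ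

/-- `lcf(ℵ₀, D)`: the least cardinality of a family `S` of `D`-nonstandard functions
such that every `D`-nonstandard `g` satisfies `f ≤_D g` for some `f ∈ S`. -/
noncomputable def lcfAleph0 {I : Type u} (D : Filter I) : Cardinal.{u} :=
  sInf { c : Cardinal.{u} | ∃ S : Set (I → ℕ), #S = c ∧ (∀ f ∈ S, IsNonstandard D f) ∧
    ∀ g : I → ℕ, IsNonstandard D g → ∃ f ∈ S, leD D f g }

/-- A filter on a Boolean algebra. -/
def IsBAFilter {B : Type u} [BooleanAlgebra B] (E : Set B) : Prop :=
  ⊤ ∈ E ∧ (∀ a b : B, a ∈ E → a ≤ b → b ∈ E) ∧ ∀ a b : B, a ∈ E → b ∈ E → a ⊓ b ∈ E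

/-- An ultrafilter on a Boolean algebra: a maximal proper filter. -/
def IsBAUltrafilter {B : Type u} [BooleanAlgebra B] (E : Set B) : Prop :=
  IsBAFilter E ∧ ⊥ ∉ E ∧ ∀ E' : Set B, IsBAFilter E' → ⊥ ∉ E' → E ⊆ E' → E' = E

/-- `E` is a `theta`-complete subset of the complete Boolean algebra `B`: every subset of `E`
of cardinality `< theta` has its infimum in `E`. -/
def IsThetaComplete {B : Type u} [CompleteBooleanAlgebra B] (theta : Cardinal.{u})
    (E : Set B) : Prop :=
  ∀ S : Set B, S ⊆ E → #S < theta → sInf S ∈ E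

/-- `X ⊆ B` is `rho⁺`-good: every monotonic `fss(rho)`-indexed sequence of members of `X`
has a multiplicative refinement in `X`. -/
def IsGoodBA {B : Type u} [BooleanAlgebra B] (rho : Cardinal.{u}) (X : Set B) : Prop :=
  ∀ a : Finset Ordinal.{u} → B,
    (∀ u, ↑u ⊆ Set.Iio rho.ord → a u ∈ X) →
    (∀ u v, ↑v ⊆ Set.Iio rho.ord → u ⊆ v → a v ≤ a u) →
    ∃ b : Ordinal.{u} → B, (∀ α, α < rho.ord → b α ∈ X) ∧
      ∀ u : Finset Ordinal.{u}, ↑u ⊆ Set.Iio rho.ord → u.inf b ≤ a u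

/-- `kappa` is a measurable cardinal: uncountable, carrying a nonprincipal `kappa`-complete
ultrafilter. -/
def IsMeasurableCard (kappa : Cardinal.{u}) : Prop :=
  ℵ₀ < kappa ∧ ∃ (K : Type u) (U : Ultrafilter K), #K = kappa ∧
    (∀ a : K, ({a} : Set K) ∉ U) ∧
    ∀ S : Set (Set K), (∀ A ∈ S, A ∈ U) → #S < kappa → ⋂₀ S ∈ U

/-- `kappa` is weakly compact: uncountable and every 2-coloring of pairs of ordinals `< kappa.ord`
has a homogeneous set of cardinality `kappa`. -/
def IsWeaklyCompactCard (kappa : Cardinal.{u}) : Prop :=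
  ℵ₀ < kappa ∧ ∀ c : Ordinal.{u} → Ordinal.{u} → Bool,
    ∃ U : Set Ordinal.{u}, U ⊆ Set.Iio kappa.ord ∧ #U = Cardinal.lift.{u+1} kappa ∧
      ∃ v : Bool, ∀ ε ∈ U, ∀ ζ ∈ U, ε < ζ → c ε ζ = v

/-!
A germ is represented by a function `I → ℕ`, so there are at most `ℵ₀ ^ λ = 2 ^ λ` of them.
Conversely, since each `t` lies in at most `f t` of the sets `X i`, any `c : λ → 2` can be
written at `t` as a binary number with `f t` digits, namely the values of `c` at the indices
`i` with `t ∈ X i`. Two such codes that agree modulo `D` agree at some point of each `X i ∈ D`,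
hence at every digit `i`: this gives `2 ^ λ` distinct germs below `2 ^ f`.
-/

universe v

def germsBelow {I : Type u} (l : Filter I) (b : I → ℕ) : Set (Filter.Germ l ℕ) :=
  {x | ∃ g : I → ℕ, (∀ t : I, g t < b t) ∧ x = Filter.Germ.ofFun g}

theorem mk_germsBelow_le {I : Type u} (l : Filter I) (b : I → ℕ) :
    #(germsBelow l b) ≤ ℵ₀ ^ #I :=
  calc #(germsBelow l b) ≤ #(range (Filter.Germ.ofFun : (I → ℕ) → Filter.Germ l ℕ)) :=
        mk_le_mk_of_subset (by rintro _ ⟨g, -, rfl⟩; exact mem_range_self g)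
    _ ≤ #(I → ℕ) := mk_range_le
    _ = ℵ₀ ^ #I := by simp

section Encoding

variable {I : Type u} {ι : Type v} (l : Filter I) (f : I → ℕ) (X : ι → Set I)

/-- At `t`, the binary number whose digit `e t i` is `c i`, for the `i` with `t ∈ X i`. -/
noncomputable def binaryGerm (e : ∀ t, {i // t ∈ X i} ↪ Fin (f t)) (c : ι → Fin 2) :
    germsBelow l (fun t => 2 ^ f t) :=
  ⟨Filter.Germ.ofFun fun t =>
      finFunctionFinEquiv (Function.extend (e t) (fun i => c i) 0),
    _, fun _ => Fin.isLt _, rfl⟩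

variable {l f X}

theorem binaryGerm_injective [l.NeBot] (hX : ∀ i, X i ∈ l)
    (e : ∀ t, {i // t ∈ X i} ↪ Fin (f t)) : Function.Injective (binaryGerm l f X e) := by
  intro c c' hcc
  funext i
  have hagree := Filter.Germ.coe_eq.1 (congrArg Subtype.val hcc)
  obtain ⟨t, hct, hti⟩ := (hagree.and (hX i)).exists
  have hdigits := finFunctionFinEquiv.injective (Fin.ext hct)
  simpa only [(e t).injective.extend_apply] using congrFun hdigits (e t ⟨i, hti⟩)

theorem lift_two_pow_le_mk_germsBelow [l.NeBot] (hX : ∀ i, X i ∈ l)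
    (hbelow : ∀ t, #{i // t ∈ X i} ≤ f t) :
    lift.{u} (2 ^ #ι) ≤ lift.{v} #(germsBelow l fun t => 2 ^ f t) := by
  have e : ∀ t, {i // t ∈ X i} ↪ Fin (f t) := fun t =>
    Classical.choice <| lift_mk_le'.1 <| by simpa using hbelow t
  simpa using lift_mk_le_lift_mk_of_injective (binaryGerm_injective hX e)

end Encoding

theorem flexible_below_implies_product_large_general {I : Type u} (lam : Cardinal.{u})
    (hlam : ℵ₀ ≤ lam) (hI : #I = lam)
    (D : Ultrafilter I)
    (f : I → ℕ)
    (X : Ordinal.{u} → Set I) (hXD : ∀ i, i < lam.ord → X i ∈ D)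
    (hbelow : ∀ t : I, #{i : Ordinal.{u} // i < lam.ord ∧ t ∈ X i} ≤ (f t : Cardinal)) :
    #{x : Filter.Germ (D : Filter I) ℕ |
        ∃ g : I → ℕ, (∀ t : I, g t < 2 ^ f t) ∧ x = Filter.Germ.ofFun g} = 2 ^ lam := by
  refine le_antisymm ?_ ?_
  · calc _ ≤ ℵ₀ ^ #I := mk_germsBelow_le (D : Filter I) _
      _ = 2 ^ lam := by rw [hI, power_eq_two_power hlam natCast_lt_aleph0.le hlam]
  · have hlower := lift_two_pow_le_mk_germsBelow (l := (D : Filter I))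
      (X := fun i : Iio lam.ord => X i) (fun i => hXD i i.2)
      (fun t => (mk_congr (Equiv.subtypeSubtypeEquivSubtypeInter _ _)).trans_le (hbelow t))
    rw [mk_Iio_ordinal, card_ord, ← lift_two_power, lift_lift, lift_le] at hlower
    exact hlower

/-- If the `lam`-regular ultrafilter `D` is `lam`-regular below the
`D`-nonstandard function `f`, then the set of `D`-equivalence classes (germs) of functions
`g` with `g t < 2 ^ f t` everywhere has cardinality exactly `2 ^ lam`. -/
theorem flexible_below_implies_product_large {I : Type u} (lam : Cardinal.{u})
    (hlam : ℵ₀ ≤ lam) (hI : #I = lam)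
    (D : Ultrafilter I) (hreg : IsRegularFilter lam (D : Filter I))
    (f : I → ℕ) (hf : IsNonstandard (D : Filter I) f)
    (X : Ordinal.{u} → Set I) (hXD : ∀ i, i < lam.ord → X i ∈ D)
    (hbelow : ∀ t : I, #{i : Ordinal.{u} // i < lam.ord ∧ t ∈ X i} ≤ (f t : Cardinal)) :
    #{x : Filter.Germ (D : Filter I) ℕ |
        ∃ g : I → ℕ, (∀ t : I, g t < 2 ^ f t) ∧ x = Filter.Germ.ofFun g} = 2 ^ lam :=
  flexible_below_implies_product_large_general lam hlam hI D f X hXD hbelow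
end

section
/- Let λ be an infinite cardinal, I a set of cardinality λ, and D a λ-regular, λ-flexible ultrafilter on I. Then μ(D) = 2^λ; in particular μ(D) ≥ λ⁺. -/
/-!
Every bounded ultraproduct is a quotient of `ℕ ^ I`, so it has at most `ℵ₀ ^ λ = 2 ^ λ`
elements. Conversely, if `∏ n_t / D` is infinite then `n` is `D`-nonstandard, hence so is
`log₂ n`; `λ`-flexibility, transported to `I` along a bijection `I ≃ λ`, yields `D`-large sets
`X_i` (`i ∈ I`) such that each `t` lies in at most `log₂ n_t` of them. Coding the trace of
`A ⊆ I` on `{i | t ∈ X_i}` by a number `< n_t` maps `𝒫(I)` injectively into the ultraproduct.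
Regularity supplies a nonstandard function, so infinite bounded ultraproducts exist and all of
them have size `2 ^ λ`.
-/

open Cardinal Set

universe u

/-- The cardinality of the `D`-ultraproduct of the sets `{0, ..., n t - 1}`:
the set of `D`-equivalence classes (germs) of functions `g` with `g t < n t` for all `t`. -/
noncomputable def boundedProdCard {I : Type u} (D : Ultrafilter I) (n : I → ℕ) : Cardinal.{u} :=
  #{x : Filter.Germ (D : Filter I) ℕ |
      ∃ g : I → ℕ, (∀ t : I, g t < n t) ∧ x = Filter.Germ.ofFun g}

/-- `μ(D)`: the minimum cardinality of an infinite ultraproduct of finite cardinals mod `D`. -/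
noncomputable def muInvariant {I : Type u} (D : Ultrafilter I) : Cardinal.{u} :=
  sInf { c : Cardinal.{u} | ∃ n : I → ℕ, ℵ₀ ≤ boundedProdCard D n ∧ boundedProdCard D n = c }

open Filter

section TraceCode

variable {α : Type*}

open scoped Classical in
noncomputable def traceCode (s : Finset α) (A : Set α) : ℕ :=
  s.powerset.equivFin ⟨{x ∈ s | x ∈ A}, Finset.mem_powerset.mpr (Finset.filter_subset _ _)⟩

theorem traceCode_lt (s : Finset α) (A : Set α) : traceCode s A < 2 ^ s.card :=
  s.card_powerset ▸ Fin.is_lt _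

theorem mem_iff_mem_of_traceCode_eq {s : Finset α} {A B : Set α}
    (h : traceCode s A = traceCode s B) {x : α} (hx : x ∈ s) : x ∈ A ↔ x ∈ B := by
  classical
  have htrace := congrArg Subtype.val (s.powerset.equivFin.injective (Fin.ext h))
  simpa [hx] using Finset.ext_iff.mp htrace x

end TraceCode

section Ultraproduct

variable {I : Type u}

theorem IsNonstandard.log {D : Filter I} {f : I → ℕ} (hf : IsNonstandard D f) {b : ℕ}
    (hb : 1 < b) : IsNonstandard D (fun t => Nat.log b (f t)) := fun k =>
  mem_of_superset (hf (b ^ (k + 1) - 1)) fun _ ht =>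
    Nat.lt_of_succ_le (Nat.le_log_of_pow_le hb (Nat.le_of_pred_lt ht))

theorem IsRegularFilter.exists_isNonstandard {lam : Cardinal.{u}} {D : Filter I}
    (hlam : ℵ₀ ≤ lam) (hreg : IsRegularFilter lam D) : ∃ f : I → ℕ, IsNonstandard D f := by
  classical
  obtain ⟨X, hXD, hXfin⟩ := hreg
  have hω (m : ℕ) : (m : Ordinal) < lam.ord :=
    (Ordinal.natCast_lt_omega0 m).trans_le (by rwa [← ord_aleph0, ord_le_ord])
  have hex (t : I) : ∃ m : ℕ, t ∉ X m :=
    (((hXfin t).preimage Nat.cast_injective.injOn).subset fun m hm => ⟨hω m, hm⟩).exists_notMem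
  refine ⟨fun t => Nat.find (hex t), fun k => ?_⟩
  have hall : ∀ᶠ t in D, ∀ m ∈ Finset.Iic k, t ∈ X m :=
    (eventually_all_finset _).mpr fun m _ => hXD m (hω m)
  filter_upwards [hall] with t ht
  exact (Nat.lt_find_iff _ _).mpr fun m hm => not_not.mpr (ht m (Finset.mem_Iic.mpr hm))

theorem IsFlexible.exists_finset_mem_card_le {lam : Cardinal.{u}} {D : Filter I} (hI : #I = lam)
    (hflex : IsFlexible lam D) {f : I → ℕ} (hf : IsNonstandard D f) :
    ∃ s : I → Finset I, (∀ i, {t | i ∈ s t} ∈ D) ∧ ∀ t, (s t).card ≤ f t := by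
  obtain ⟨X, hXD, hXcard⟩ := hflex f hf
  obtain ⟨e⟩ : Nonempty (I ≃ Set.Iio lam.ord) :=
    lift_mk_eq'.mp (by rw [mk_Iio_ordinal, card_ord, lift_lift, hI])
  have hcard (t : I) : #{i | t ∈ X (e i)} ≤ f t := by
    have hemb : lift.{u + 1} #{i | t ∈ X (e i)} ≤ lift.{u} #{α // α < lam.ord ∧ t ∈ X α} :=
      lift_mk_le'.mpr ⟨⟨fun i => ⟨e i, (e i).2, i.2⟩, fun i j h => by
        simp only [Subtype.mk.injEq] at h
        exact Subtype.ext (e.injective (Subtype.ext h))⟩⟩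
    rw [lift_id'.{u, u + 1}] at hemb
    exact lift_le_nat_iff.mp (hemb.trans (hXcard t))
  have hfin (t : I) : {i | t ∈ X (e i)}.Finite :=
    lt_aleph0_iff_set_finite.mp ((hcard t).trans_lt natCast_lt_aleph0)
  refine ⟨fun t => (hfin t).toFinset, fun i => ?_, fun t => ?_⟩
  · simpa using hXD _ (e i).2
  · have := hcard t
    rwa [← (hfin t).coe_toFinset, Finset.coe_sort_coe, mk_coe_finset, Nat.cast_le] at this

theorem boundedProdCard_le_two_power (hI : ℵ₀ ≤ #I) (D : Ultrafilter I) (n : I → ℕ) :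
    boundedProdCard D n ≤ 2 ^ #I :=
  calc boundedProdCard D n ≤ #(range (Germ.ofFun : (I → ℕ) → Germ (D : Filter I) ℕ)) :=
        mk_le_mk_of_subset (by rintro _ ⟨g, -, rfl⟩; exact mem_range_self g)
    _ ≤ #(I → ℕ) := mk_range_le
    _ = ℵ₀ ^ #I := by simp
    _ = 2 ^ #I := power_eq_two_power hI (natCast_lt_aleph0 (n := 2)).le hI

/-- `A ↦ [t ↦ traceCode (s t) A]` is injective: if `i ∈ A \ B`, the codes of `A` and `B` differ on
the `D`-large set `{t | i ∈ s t}`. -/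
theorem mk_set_le_boundedProdCard {Ω : Type u} (D : Ultrafilter I) {n : I → ℕ}
    (s : I → Finset Ω) (hs : ∀ i, {t | i ∈ s t} ∈ D) (hcard : ∀ t, 2 ^ (s t).card ≤ n t) :
    #(Set Ω) ≤ boundedProdCard D n := by
  let code : Set Ω → I → ℕ := fun A t => traceCode (s t) A
  have hlt (A : Set Ω) (t : I) : code A t < n t := (traceCode_lt _ _).trans_le (hcard t)
  refine mk_le_of_injective (f := fun A => ⟨Germ.ofFun (code A), code A, hlt A, rfl⟩)
    fun A B hAB => ?_
  have heq : ∀ᶠ t in D, code A t = code B t := Germ.coe_eq.mp (congrArg Subtype.val hAB)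
  ext i
  obtain ⟨t, hti, ht⟩ := (Filter.Eventually.and (hs i) heq).exists
  exact mem_iff_mem_of_traceCode_eq ht hti

theorem boundedProdCard_lt_aleph0_of_eventually_le {D : Ultrafilter I} {n : I → ℕ} {k : ℕ}
    (hk : ∀ᶠ t in D, n t ≤ k) : boundedProdCard D n < ℵ₀ := by
  refine lt_aleph0_iff_set_finite.mpr
    (((finite_Iic k).image fun j => (Germ.const j : Germ (D : Filter I) ℕ)).subset ?_)
  rintro _ ⟨g, hg, rfl⟩
  have hgk : ⋃ j ∈ Iic k, {t | g t = j} ∈ D :=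
    hk.mono fun t ht => mem_biUnion (mem_Iic.mpr ((hg t).le.trans ht)) rfl
  obtain ⟨j, hj, hgj⟩ := (D.finite_biUnion_mem_iff (finite_Iic k)).mp hgk
  exact ⟨j, hj, (Germ.coe_eq.mpr hgj).symm⟩

theorem isNonstandard_of_aleph0_le_boundedProdCard {D : Ultrafilter I} {n : I → ℕ}
    (h : ℵ₀ ≤ boundedProdCard D n) : IsNonstandard D n := fun k => by
  by_contra hk
  exact h.not_gt (boundedProdCard_lt_aleph0_of_eventually_le
    (mem_of_superset (D.compl_mem_iff_notMem.mpr hk) fun t (ht : ¬k < n t) => not_lt.mp ht))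

theorem pos_of_aleph0_le_boundedProdCard {D : Ultrafilter I} {n : I → ℕ}
    (h : ℵ₀ ≤ boundedProdCard D n) (t : I) : 0 < n t :=
  Nat.pos_of_ne_zero fun ht => h.not_gt <| lt_aleph0_iff_set_finite.mpr <|
    finite_empty.subset fun _ ⟨_, hg, _⟩ => (Nat.not_lt_zero _ (ht ▸ hg t)).elim

theorem two_power_le_boundedProdCard {lam : Cardinal.{u}} (hI : #I = lam) {D : Ultrafilter I}
    (hflex : IsFlexible lam (D : Filter I)) {n : I → ℕ} (hn : IsNonstandard D n)
    (hpos : ∀ t, 0 < n t) : 2 ^ lam ≤ boundedProdCard D n := by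
  obtain ⟨s, hs, hcard⟩ := hflex.exists_finset_mem_card_le hI (hn.log one_lt_two)
  refine hI ▸ mk_set.symm.trans_le (mk_set_le_boundedProdCard D s hs fun t => ?_)
  exact (Nat.pow_le_pow_right two_pos (hcard t)).trans (Nat.pow_log_le_self 2 (hpos t).ne')

theorem boundedProdCard_eq_two_power {lam : Cardinal.{u}} (hlam : ℵ₀ ≤ lam) (hI : #I = lam)
    {D : Ultrafilter I} (hflex : IsFlexible lam (D : Filter I)) {n : I → ℕ}
    (hn : IsNonstandard D n) (hpos : ∀ t, 0 < n t) : boundedProdCard D n = 2 ^ lam :=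
  le_antisymm (hI ▸ boundedProdCard_le_two_power (hI ▸ hlam) D n)
    (two_power_le_boundedProdCard hI hflex hn hpos)

end Ultraproduct

/-- a `lam`-regular `lam`-flexible ultrafilter on a set of cardinality `lam`
has `μ(D) = 2 ^ lam`; in particular `μ(D) ≥ lam⁺`. -/
theorem flexible_implies_mu_large {I : Type u} (lam : Cardinal.{u})
    (hlam : ℵ₀ ≤ lam) (hI : #I = lam)
    (D : Ultrafilter I) (hreg : IsRegularFilter lam (D : Filter I))
    (hflex : IsFlexible lam (D : Filter I)) :
    muInvariant D = 2 ^ lam ∧ Order.succ lam ≤ muInvariant D := by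
  obtain ⟨f, hf⟩ := hreg.exists_isNonstandard hlam
  have hf_succ : IsNonstandard D (f · + 1) := fun k =>
    mem_of_superset (hf k) fun _ ht => Nat.lt_succ_of_lt ht
  have hf_eq := boundedProdCard_eq_two_power hlam hI hflex hf_succ fun t => (f t).succ_pos
  have hS : {c | ∃ n : I → ℕ, ℵ₀ ≤ boundedProdCard D n ∧ boundedProdCard D n = c} =
      {2 ^ lam} := by
    refine eq_singleton_iff_unique_mem.mpr ⟨⟨_, hf_eq ▸ hlam.trans (cantor lam).le, hf_eq⟩, ?_⟩
    rintro _ ⟨n, hn, rfl⟩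
    exact boundedProdCard_eq_two_power hlam hI hflex
      (isNonstandard_of_aleph0_le_boundedProdCard hn) (pos_of_aleph0_le_boundedProdCard hn)
  have hmu : muInvariant D = 2 ^ lam := by rw [muInvariant, hS, csInf_singleton]
  exact ⟨hmu, hmu ▸ Order.succ_le_of_lt (cantor lam)⟩
end

section
/- Let D be a λ-regular ultrafilter on a set I of cardinality λ. If D is λ⁺-good, then D is λ-flexible. -/
open Cardinal Set

universe u

/-!
Given a nonstandard `f`, the sets `{t | |u| ≤ f t}` for finite `u ⊆ λ` form a monotonic family
in `D`; goodness refines it to a multiplicative family `g`, and we take `X α = g {α}`.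
Multiplicativity gives `g u = ⋂ α ∈ u, X α`, so any finite set of indices `α` with `t ∈ X α`
has size at most `f t`, and hence so does the set of all of them.
-/

theorem Finset.biInter_singleton_eq_of_inter_eq_union {α β : Type*} [DecidableEq α]
    {P : Set α} {g : Finset α → Set β}
    (hmul : ∀ u v : Finset α, ↑u ⊆ P → ↑v ⊆ P → g u ∩ g v = g (u ∪ v))
    {s : Finset α} (hs : ↑s ⊆ P) (hne : s.Nonempty) : ⋂ a ∈ s, g {a} = g s := by
  induction hne using Finset.Nonempty.cons_induction with
  | singleton a => simp
  | cons a s ha hne ih =>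
    rw [Finset.coe_cons, Set.insert_subset_iff] at hs
    rw [Finset.cons_eq_insert, Finset.set_biInter_insert, ih hs.2,
      hmul {a} s (by simpa using hs.1) hs.2, Finset.insert_eq]

theorem IsGoodFilter.isFlexible {I : Type u} {mu : Cardinal.{u}} {D : Filter I}
    (hgood : IsGoodFilter mu D) : IsFlexible mu D := by
  intro f hf
  obtain ⟨g, hg_mem, hg_sub, hg_mul⟩ := hgood (fun u => {t | u.card ≤ f t})
    (fun u _ => Filter.mem_of_superset (hf u.card) fun _ ht => Nat.le_of_lt ht)
    (fun u v _ huv _ ht => (Finset.card_le_card huv).trans ht)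
  refine ⟨fun α => g {α}, fun α hα => hg_mem {α} (by simpa using hα), fun t => ?_⟩
  refine mk_le_iff_forall_finset_subset_card_le.2 fun s hs => ?_
  rcases s.eq_empty_or_nonempty with rfl | hne
  · simp
  have hs_lt : ↑s ⊆ Iio mu.ord := fun α hα => (hs hα).1
  have ht : t ∈ g s := by
    rw [← Finset.biInter_singleton_eq_of_inter_eq_union hg_mul hs_lt hne]
    exact mem_iInter₂.2 fun α hα => (hs hα).2
  exact hg_sub s hs_lt ht

theorem good_implies_flexible_general {I : Type u} (lam : Cardinal.{u})
    (D : Ultrafilter I)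
    (hgood : IsGoodFilter lam (D : Filter I)) :
    IsFlexible lam (D : Filter I) :=
  hgood.isFlexible

/-- a `lam`-regular, `lam⁺`-good ultrafilter on a set of cardinality `lam`
is `lam`-flexible. -/
theorem good_implies_flexible {I : Type u} (lam : Cardinal.{u}) (hI : #I = lam)
    (D : Ultrafilter I) (hreg : IsRegularFilter lam (D : Filter I))
    (hgood : IsGoodFilter lam (D : Filter I)) :
    IsFlexible lam (D : Filter I) :=
  good_implies_flexible_general lam D hgood
end

section
/- Suppose λ ≥ μ ≥ ℵ₀, (I, D, G) is a (λ, μ)-good triple, g ∈ G, and ℕ ⊆ range(g) (identifying μ with an ordinal). Define g* : I → ℕ by g*(s) = g(s) if g(s) ∈ ℕ and g*(s) = 0 otherwise. Then for every ultrafilter D* on I extending D ∪ {{s ∈ I : g*(s) > n} : n ∈ ℕ}: g* is D*-nonstandard, yet there is no family ⟨X_α : α < μ⁺⟩ of members of D* such that |{α < μ⁺ : t ∈ X_α}| ≤ g*(t) for every t ∈ I; in particular D* is not μ⁺-flexible. -/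
open Cardinal Set

universe u

/-!
By maximality of `D`, every member of `D*` contains a set `A_h ∩ B` with `h ∈ FIN(G)`, `B ∈ D`,
and we may take `g ∈ dom h`. Given members `X_α` (`α < μ⁺`) of `D*` with witnesses `h_α`, the
pigeonhole principle gives `μ⁺` indices on which `h_α(g)` is a fixed value `w`, and a Δ-system
argument then gives, for every `k`, `k` of these `h_α` that are pairwise compatible. Their union
lies in `FIN(G)`, so by independence some `t` with `g(t) = w` lies in all `k` of the `X_α`. Since
`g*` is constant on `{g = w}`, taking `k > g*(t)` contradicts `|{α : t ∈ X_α}| ≤ g*(t)`.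
-/

universe v w

section Combinatorics

variable {ι : Type w} {κ : Cardinal.{w}}

theorem mk_biUnion_le_of_forall_mk_le {β : Type v} (hκ : ℵ₀ ≤ κ) (A : β → Set ι) {S : Set β}
    (hS : lift.{w} #S ≤ lift.{v} κ) (hA : ∀ b ∈ S, #(A b) ≤ κ) : #(⋃ b ∈ S, A b) ≤ κ := by
  refine lift_le.{v}.1 ((mk_biUnion_le_lift A S).trans ?_)
  calc lift.{w} #S * ⨆ b : S, lift.{v} #(A b) ≤ lift.{v} κ * lift.{v} κ :=
        mul_le_mul' hS (ciSup_le' fun b => lift_le.2 (hA b b.2))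
    _ = lift.{v} κ := mul_eq_self (aleph0_le_lift.2 hκ)

theorem exists_lt_mk_fiber {β : Type v} (hκ : ℵ₀ ≤ κ) {T : Set ι} (hT : κ < #T) (f : ι → β)
    {S : Set β} (hS : lift.{w} #S ≤ lift.{v} κ) (hf : ∀ i ∈ T, f i ∈ S) :
    ∃ b ∈ S, κ < #{i ∈ T | f i = b} := by
  by_contra! hsmall
  have hcover : T ⊆ ⋃ b ∈ S, {i ∈ T | f i = b} := fun i hi => mem_biUnion (hf i hi) ⟨hi, rfl⟩
  exact hT.not_ge ((mk_le_mk_of_subset hcover).trans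
    (mk_biUnion_le_of_forall_mk_le hκ _ hS hsmall))

theorem exists_finset_pairwiseDisjoint {V : Type v} (hκ : ℵ₀ ≤ κ) (p : ι → Finset V) (k : ℕ)
    {T : Set ι} (hT : κ < #T) (hp : ∀ x, #{i ∈ T | x ∈ p i} ≤ κ) :
    ∃ s : Finset ι, ↑s ⊆ T ∧ s.card = k ∧ (s : Set ι).PairwiseDisjoint p := by
  classical
  induction k generalizing T with
  | zero => exact ⟨∅, by simp, rfl, by simp⟩
  | succ k ih =>
    obtain ⟨i₀, hi₀⟩ := nonempty_coe_sort.1 (mk_ne_zero_iff.1 (ne_bot_of_gt hT))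
    set T' := {i ∈ T | i ≠ i₀ ∧ Disjoint (p i₀) (p i)}
    have hsdiff : T \ T' ⊆ insert i₀ (⋃ x ∈ (p i₀ : Set V), {i ∈ T | x ∈ p i}) := by
      rintro i ⟨hi, hiT'⟩
      by_cases hii₀ : i = i₀
      · exact .inl hii₀
      obtain ⟨x, hx₀, hx⟩ := Finset.not_disjoint_iff.1 fun h => hiT' ⟨hi, hii₀, h⟩
      exact .inr (mem_biUnion hx₀ ⟨hi, hx⟩)
    have hsmall : #(T \ T' : Set ι) ≤ κ := by
      refine (mk_le_mk_of_subset hsdiff).trans (mk_insert_le.trans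
        (add_le_of_le hκ (mk_biUnion_le_of_forall_mk_le hκ _ ?_ fun x _ => hp x)
          (one_le_aleph0.trans hκ)))
      exact (lift_le_aleph0.2 (finset_card_lt_aleph0 _).le).trans (aleph0_le_lift.2 hκ)
    have hT' : κ < #T' := by
      by_contra! h
      exact hT.not_ge ((le_mk_sdiff_add_mk T T').trans (add_le_of_le hκ hsmall h))
    obtain ⟨s, hsT', rfl, hs⟩ :=
      ih hT' fun x => (mk_le_mk_of_subset (t := {i ∈ T | x ∈ p i})
        fun _ hi => ⟨hi.1.1, hi.2⟩).trans (hp x)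
    have hi₀s : i₀ ∉ s := fun h => (hsT' h).2.1 rfl
    refine ⟨insert i₀ s, ?_, Finset.card_insert_of_notMem hi₀s, ?_⟩
    · rw [Finset.coe_insert]
      exact insert_subset hi₀ fun i hi => (hsT' hi).1
    · rw [Finset.coe_insert]
      exact hs.insert fun j hj _ => (hsT' hj).2.2

def Compatible {V W : Type*} (p : ι → Finset V) (v : ι → V → W) (i j : ι) : Prop :=
  ∀ x ∈ p i, x ∈ p j → v i x = v j x

theorem Compatible.of_disjoint {V W : Type*} {p : ι → Finset V} {v : ι → V → W} {i j : ι}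
    (h : Disjoint (p i) (p j)) : Compatible p v i j :=
  fun _ hi hj => (Finset.disjoint_left.1 h hi hj).elim

/-- A point lying in more than `κ` of the domains is handled by fixing its value (pigeonhole) and
deleting it from all domains, which lowers the bound `d`; if there is no such point, a greedy
choice gives pairwise disjoint domains. -/
theorem exists_finset_pairwise_compatible_of_card_le {V : Type*} {W : Type v} (hκ : ℵ₀ ≤ κ)
    {S : Set W} (hS : lift.{w} #S ≤ lift.{v} κ) (k d : ℕ) {p : ι → Finset V} {v : ι → V → W}
    (hv : ∀ i, ∀ x ∈ p i, v i x ∈ S) {T : Set ι} (hT : κ < #T) (hd : ∀ i ∈ T, (p i).card ≤ d) :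
    ∃ s : Finset ι, ↑s ⊆ T ∧ s.card = k ∧ (s : Set ι).Pairwise (Compatible p v) := by
  classical
  induction d using Nat.strong_induction_on generalizing p T with
  | _ d ih =>
    by_cases heavy : ∃ x, κ < #{i ∈ T | x ∈ p i}
    · obtain ⟨x, hx⟩ := heavy
      obtain ⟨i, hiT, hxi⟩ := nonempty_coe_sort.1 (mk_ne_zero_iff.1 (ne_bot_of_gt hx))
      have hd₀ : 0 < d := (Finset.card_pos.2 ⟨x, hxi⟩).trans_le (hd i hiT)
      obtain ⟨b, -, hb⟩ :=
        exists_lt_mk_fiber hκ hx (fun i => v i x) hS fun i hi => hv i x hi.2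
      obtain ⟨s, hsT, hs, hcomp⟩ := ih (d - 1) (by omega) (p := fun i => (p i).erase x)
        (fun i y hy => hv i y (Finset.mem_of_mem_erase hy)) hb fun i hi => by
          rw [Finset.card_erase_of_mem hi.1.2]
          exact Nat.sub_le_sub_right (hd i hi.1.1) 1
      refine ⟨s, fun i hi => (hsT hi).1.1, hs, fun i hi j hj hij y hyi hyj => ?_⟩
      rcases eq_or_ne y x with rfl | hyx
      · rw [(hsT hi).2, (hsT hj).2]
      · exact hcomp hi hj hij y (Finset.mem_erase.2 ⟨hyx, hyi⟩) (Finset.mem_erase.2 ⟨hyx, hyj⟩)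
    · obtain ⟨s, hsT, hs, hdisj⟩ :=
        exists_finset_pairwiseDisjoint hκ p k hT fun x => not_lt.1 fun hx => heavy ⟨x, hx⟩
      exact ⟨s, hsT, hs, hdisj.mono' fun _ _ => Compatible.of_disjoint⟩

theorem exists_finset_pairwise_compatible {V : Type*} {W : Type v} (hκ : ℵ₀ ≤ κ)
    {S : Set W} (hS : lift.{w} #S ≤ lift.{v} κ) {p : ι → Finset V} {v : ι → V → W}
    (hv : ∀ i, ∀ x ∈ p i, v i x ∈ S) {T : Set ι} (hT : κ < #T) (k : ℕ) :
    ∃ s : Finset ι, ↑s ⊆ T ∧ s.card = k ∧ (s : Set ι).Pairwise (Compatible p v) := by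
  obtain ⟨d, -, hd⟩ := exists_lt_mk_fiber hκ hT (fun i => (p i).card) (S := univ)
    (by simpa using hκ) fun _ _ => trivial
  obtain ⟨s, hsT, hs, hcomp⟩ :=
    exists_finset_pairwise_compatible_of_card_le hκ hS k d hv hd fun i hi => hi.2.le
  exact ⟨s, hsT.trans (sep_subset _ _), hs, hcomp⟩

theorem card_le_mk_mem_and {α : Type*} {T : Set α} {P : α → Prop} (s : Finset T)
    (hs : ∀ a ∈ s, P a) : (s.card : Cardinal) ≤ #{a // a ∈ T ∧ P a} := by
  rw [← mk_coe_finset]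
  exact mk_le_of_injective (f := fun a : (s : Set T) => ⟨a.1.1, a.1.2, hs a.1 a.2⟩)
    fun a b hab => Subtype.ext (Subtype.ext (by simpa using hab))

end Combinatorics

section FiniteAssignments

variable {I : Type u} {D : Filter I} {G : Set (I → Ordinal.{u})}

namespace PartialAssignment

theorem exists_mem_dom_Aset_subset (h : PartialAssignment I G) {g : I → Ordinal.{u}}
    (hg : g ∈ G) (t₀ : I) : ∃ h' : PartialAssignment I G, g ∈ h'.dom ∧ h'.Aset ⊆ h.Aset := by
  classical
  refine ⟨⟨insert g h.dom, ?_, fun x => if x ∈ h.dom then h.val x else x t₀, ?_⟩,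
    Finset.mem_insert_self _ _, ?_⟩
  · rw [Finset.coe_insert]
    exact insert_subset hg h.dom_sub
  · intro x _
    split_ifs with hx
    exacts [h.val_mem x hx, mem_range_self t₀]
  · intro t ht x hx
    simpa [hx] using ht x (Finset.mem_insert_of_mem hx)

theorem exists_Aset_subset_of_pairwise_compatible {ι : Type*} (s : Finset ι)
    (h : ι → PartialAssignment I G)
    (hs : (s : Set ι).Pairwise (Compatible (fun i => (h i).dom) fun i => (h i).val)) :
    ∃ h' : PartialAssignment I G, ∀ i ∈ s, h'.Aset ⊆ (h i).Aset := by
  classical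
  refine ⟨⟨s.biUnion fun i => (h i).dom, ?_,
    fun x => if hx : ∃ i ∈ s, x ∈ (h i).dom then (h hx.choose).val x else 0, ?_⟩, ?_⟩
  · intro x hx
    obtain ⟨i, -, hx⟩ := Finset.mem_biUnion.1 hx
    exact (h i).dom_sub hx
  · intro x hx
    have hx' : ∃ i ∈ s, x ∈ (h i).dom := Finset.mem_biUnion.1 hx
    rw [dif_pos hx']
    exact (h _).val_mem x hx'.choose_spec.2
  · intro i hi t ht x hx
    have hx' : ∃ i ∈ s, x ∈ (h i).dom := ⟨i, hi, hx⟩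
    obtain ⟨hj, hxj⟩ := hx'.choose_spec
    have htx := ht x (Finset.mem_biUnion.2 ⟨i, hi, hx⟩)
    dsimp only at htx
    rw [dif_pos hx'] at htx
    rw [htx]
    rcases eq_or_ne hx'.choose i with hji | hji
    · rw [hji]
    · exact hs hj hi hji x hxj hx

end PartialAssignment

theorem IndependentMod.nonempty_Aset_inter (hind : IndependentMod D G)
    (h : PartialAssignment I G) {B : Set I} (hB : B ∈ D) : (h.Aset ∩ B).Nonempty := by
  by_contra hempty
  exact hind h (Filter.mem_of_superset hB fun t htB htA => hempty ⟨t, htA, htB⟩)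

theorem exists_Aset_inter_subset_of_maximal
    (hmax : ∀ D' : Filter I, (∀ A ∈ D, A ∈ D') → IndependentMod D' G → D' = D)
    {F : Filter I} [F.NeBot] (hFD : F ≤ D) {A : Set I} (hA : A ∈ F) :
    ∃ h : PartialAssignment I G, ∃ B ∈ D, h.Aset ∩ B ⊆ A := by
  by_contra! hcon
  -- otherwise `D ⊓ 𝓟 Aᶜ` would be a filter modulo which `G` is still independent
  have hind : IndependentMod (D ⊓ Filter.principal Aᶜ) G := by
    intro h hmem
    rw [Filter.mem_inf_principal] at hmem
    exact hcon h _ hmem fun t ⟨htA, htB⟩ => by_contra fun htA' => htB htA' htA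
  have hAc : Aᶜ ∈ D := hmax _ (fun B hB => Filter.mem_inf_of_left hB) hind ▸
    Filter.mem_inf_of_right (Filter.mem_principal_self _)
  exact Filter.compl_notMem hA (hFD hAc)

theorem exists_fiber_meets_arbitrarily_large_intersections (hind : IndependentMod D G)
    {S : Set Ordinal.{u}} (hGS : ∀ x ∈ G, ∀ t, x t ∈ S) {ι : Type w} {κ : Cardinal.{w}}
    (hκ : ℵ₀ ≤ κ) (hS : lift.{w} #S ≤ lift.{u + 1} κ) (hι : κ < #ι) {X : ι → Set I}
    (hX : ∀ i, ∃ h : PartialAssignment I G, ∃ B ∈ D, h.Aset ∩ B ⊆ X i)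
    {g : I → Ordinal.{u}} (hg : g ∈ G) :
    ∃ w, ∀ k : ℕ, ∃ s : Finset ι, k < s.card ∧ ∃ t, g t = w ∧ ∀ i ∈ s, t ∈ X i := by
  have hgX : ∀ i, ∃ h : PartialAssignment I G, g ∈ h.dom ∧ ∃ B ∈ D, h.Aset ∩ B ⊆ X i := by
    intro i
    obtain ⟨h, B, hB, hsub⟩ := hX i
    obtain ⟨t₀, -⟩ := hind.nonempty_Aset_inter h hB
    obtain ⟨h', hgh', hh'⟩ := h.exists_mem_dom_Aset_subset hg t₀
    exact ⟨h', hgh', B, hB, (inter_subset_inter_left B hh').trans hsub⟩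
  choose h hgh B hB hsub using hgX
  have hval : ∀ i, ∀ x ∈ (h i).dom, (h i).val x ∈ S := fun i x hx => by
    obtain ⟨t, ht⟩ := (h i).val_mem x hx
    exact ht ▸ hGS x ((h i).dom_sub hx) t
  obtain ⟨w, -, hw⟩ := exists_lt_mk_fiber hκ (T := univ) (by rwa [mk_univ])
    (fun i => (h i).val g) hS fun i _ => hval i g (hgh i)
  refine ⟨w, fun k => ?_⟩
  obtain ⟨s, hsw, hs, hcomp⟩ := exists_finset_pairwise_compatible hκ hS hval hw (k + 1)
  obtain ⟨h', hh'⟩ := PartialAssignment.exists_Aset_subset_of_pairwise_compatible s h hcomp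
  obtain ⟨t, htA, htB⟩ :=
    hind.nonempty_Aset_inter h' ((Filter.biInter_finset_mem s).2 fun i _ => hB i)
  obtain ⟨i₀, hi₀⟩ : s.Nonempty := Finset.card_pos.1 (by omega)
  refine ⟨s, by omega, t, ?_, fun i hi => hsub i ⟨hh' i hi htA, mem_iInter₂.1 htB i hi⟩⟩
  rw [hh' i₀ hi₀ htA g (hgh i₀)]
  exact (hsw hi₀).2

end FiniteAssignments

theorem good_triple_prevents_flexibility_general {I : Type u} (lam mu : Cardinal.{u})
    (hmu : ℵ₀ ≤ mu)
    (D : Filter I) (G : Set (I → Ordinal.{u}))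
    (htriple : IsGoodTriple lam mu D G)
    (g : I → Ordinal.{u}) (hg : g ∈ G)
    (gstar : I → ℕ)
    (hgstar₁ : ∀ s : I, ∀ n : ℕ, g s = (n : Ordinal.{u}) → gstar s = n)
    (hgstar₂ : ∀ s : I, (¬ ∃ n : ℕ, g s = (n : Ordinal.{u})) → gstar s = 0)
    (Dstar : Ultrafilter I)
    (hext : ∀ A ∈ D, A ∈ Dstar)
    (hext2 : ∀ n : ℕ, {s : I | n < gstar s} ∈ Dstar) :
    IsNonstandard (Dstar : Filter I) gstar ∧
    (¬ ∃ X : Ordinal.{u} → Set I,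
        (∀ α, α < (Order.succ mu).ord → X α ∈ Dstar) ∧
        ∀ t : I, #{α : Ordinal.{u} // α < (Order.succ mu).ord ∧ t ∈ X α}
          ≤ (gstar t : Cardinal)) ∧
    ¬ IsFlexible (Order.succ mu) (Dstar : Filter I) := by
  obtain ⟨⟨-, -, hran, hind⟩, hmax⟩ := htriple
  have hgstar : ∀ s t, g s = g t → gstar s = gstar t := by
    intro s t hst
    by_cases hn : ∃ n : ℕ, g s = n
    · obtain ⟨n, hn⟩ := hn
      rw [hgstar₁ s n hn, hgstar₁ t n (hst ▸ hn)]
    · rw [hgstar₂ s hn, hgstar₂ t (hst ▸ hn)]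
  have hno_family : ¬ ∃ X : Ordinal.{u} → Set I,
      (∀ α, α < (Order.succ mu).ord → X α ∈ Dstar) ∧
      ∀ t : I, #{α : Ordinal.{u} // α < (Order.succ mu).ord ∧ t ∈ X α}
        ≤ (gstar t : Cardinal) := by
    rintro ⟨X, hXD, hXcard⟩
    obtain ⟨w, hw⟩ := exists_fiber_meets_arbitrarily_large_intersections hind
      (S := Iio mu.ord) hran (κ := lift.{u + 1} mu) (aleph0_le_lift.2 hmu)
      (by rw [mk_Iio_ordinal, card_ord])
      (by rw [mk_Iio_ordinal, card_ord]; exact lift_lt.2 (Order.lt_succ mu))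
      (X := fun α : Iio (Order.succ mu).ord => X α)
      (fun α => exists_Aset_inter_subset_of_maximal hmax (Filter.le_def.2 hext) (hXD α α.2)) hg
    obtain ⟨-, -, t₀, ht₀, -⟩ := hw 0
    obtain ⟨s, hs, t, ht, htX⟩ := hw (gstar t₀)
    have hcard := (card_le_mk_mem_and s htX).trans (hXcard t)
    rw [hgstar t t₀ (ht.trans ht₀.symm)] at hcard
    exact hs.not_ge (by exact_mod_cast hcard)
  exact ⟨hext2, hno_family, fun hflex => hno_family (hflex gstar hext2)⟩

/-- in a `(lam, mu)`-good triple, consuming a function `g ∈ G` with `ℕ ⊆ range g`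
prevents any subsequent ultrafilter from being `mu⁺`-flexible, witnessed by `g*`. -/
theorem good_triple_prevents_flexibility {I : Type u} (lam mu : Cardinal.{u})
    (hmu : ℵ₀ ≤ mu) (hml : mu ≤ lam)
    (D : Filter I) (G : Set (I → Ordinal.{u}))
    (htriple : IsGoodTriple lam mu D G)
    (g : I → Ordinal.{u}) (hg : g ∈ G)
    (hrange : ∀ n : ℕ, (n : Ordinal.{u}) ∈ Set.range g)
    (gstar : I → ℕ)
    (hgstar₁ : ∀ s : I, ∀ n : ℕ, g s = (n : Ordinal.{u}) → gstar s = n)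
    (hgstar₂ : ∀ s : I, (¬ ∃ n : ℕ, g s = (n : Ordinal.{u})) → gstar s = 0)
    (Dstar : Ultrafilter I)
    (hext : ∀ A ∈ D, A ∈ Dstar)
    (hext2 : ∀ n : ℕ, {s : I | n < gstar s} ∈ Dstar) :
    IsNonstandard (Dstar : Filter I) gstar ∧
    (¬ ∃ X : Ordinal.{u} → Set I,
        (∀ α, α < (Order.succ mu).ord → X α ∈ Dstar) ∧
        ∀ t : I, #{α : Ordinal.{u} // α < (Order.succ mu).ord ∧ t ∈ X α}
          ≤ (gstar t : Cardinal)) ∧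
    ¬ IsFlexible (Order.succ mu) (Dstar : Filter I) :=
  good_triple_prevents_flexibility_general lam mu hmu D G htriple g hg gstar hgstar₁ hgstar₂ Dstar
    hext hext2
end

section
/- Suppose μ ≤ λ, μ is a regular cardinal, |I| = λ, D is a λ-regular filter on I, G is a family of functions on I each of whose ranges is an ordinal < μ, G is independent mod D, and D is maximal among filters on I modulo which G is independent. Let g ∈ G with ℕ ⊆ range(g), and define g* : I → ℕ by g*(s) = g(s) if g(s) ∈ ℕ and g*(s) = 0 otherwise. Then for every ultrafilter D* on I extending D ∪ {{s ∈ I : g*(s) > n} : n ∈ ℕ}: g* is D*-nonstandard, yet there is no family ⟨X_α : α < μ⟩ of members of D* such that |{α < μ : t ∈ X_α}| ≤ g*(t) for every t ∈ I; in particular D* is not μ-flexible. -/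
open Cardinal Set

universe u

/-!
Each `X α ∈ D*` is nonzero mod `D`, so by maximality of `D` some `A_{h_α}`, `h_α ∈ FIN(G)`, is
contained in `X α` mod `D`, and we may assume `g ∈ dom h_α`. The `h_α` are finite partial functions
with values below `μ`, which is regular and (as `ℕ ⊆ range g`) uncountable, so a Δ-system argument
yields `μ` many pairwise compatible ones; they share a value `v` at `g`. If `g* = n` on `{g = v}`,
the union of `n + 1` of them lies in `FIN(G)`, so its `A`-set is nonzero mod `D` and meets the
corresponding `n + 1` sets `X α` at a point `t` with `g*(t) = n`.
-/

section PairwiseCompatible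

variable {X : Type*} {K : Type u} {mu : Cardinal.{u}}

theorem Cardinal.mk_biUnion_finset_lt {c : Cardinal.{u}} (hc : ℵ₀ ≤ c) (t : X → Set K)
    (s : Finset X) (ht : ∀ x ∈ s, #(t x) < c) : #(⋃ x ∈ s, t x) < c := by
  classical
  induction s using Finset.induction_on with
  | empty => simpa using aleph0_pos.trans_le hc
  | insert x s _ ih =>
    rw [Finset.set_biUnion_insert]
    exact (mk_union_le _ _).trans_lt (add_lt_of_lt hc (ht x (s.mem_insert_self x))
      (ih fun y hy => ht y (Finset.mem_insert_of_mem hy)))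

theorem Cardinal.exists_le_mk_sep_eq_of_lt_ord (hreg : mu.IsRegular) {s : Set K} (hs : mu ≤ #s)
    {β : Ordinal.{u}} (hβ : β < mu.ord) (c : K → Ordinal.{u}) (hc : ∀ k ∈ s, c k < β) :
    ∃ γ, mu ≤ #{k | k ∈ s ∧ c k = γ} := by
  obtain ⟨a, ha⟩ := infinite_pigeonhole_card (fun k : s => Ordinal.ToType.mk ⟨c k, hc k k.2⟩)
    mu hs hreg.aleph0_le (by rwa [hreg.cof_ord, mk_toType, ← lt_ord])
  refine ⟨(Ordinal.ToType.mk.symm a).1, ha.trans ?_⟩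
  rw [← mk_image_eq Subtype.val_injective]
  refine mk_le_mk_of_subset ?_
  rintro _ ⟨k, hk, rfl⟩
  exact ⟨k.2, by rw [← hk, OrderIso.symm_apply_apply]⟩

theorem Cardinal.exists_pairwiseDisjoint_of_isRegular (hreg : mu.IsRegular) {s : Set K}
    (hs : mu ≤ #s) (d : K → Finset X) (hsmall : ∀ x, #{k | k ∈ s ∧ x ∈ d k} < mu) :
    ∃ S ⊆ s, mu ≤ #S ∧ S.PairwiseDisjoint d := by
  obtain ⟨M, hM⟩ := zorn_subset {S | S ⊆ s ∧ S.PairwiseDisjoint d} fun c hc hchain =>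
    ⟨⋃₀ c, ⟨sUnion_subset fun S hS => (hc hS).1,
      (pairwiseDisjoint_sUnion hchain.directedOn).2 fun S hS => (hc hS).2⟩,
      fun _ => subset_sUnion_of_mem⟩
  refine ⟨M, hM.prop.1, not_lt.1 fun hMsmall => ?_, hM.prop.2⟩
  set N := ⋃ i : M, ⋃ x ∈ d i, {k | k ∈ s ∧ x ∈ d k}
  have hN : #N < mu := (card_iUnion_lt_iff_forall_of_isRegular hreg hMsmall).2 fun i =>
    mk_biUnion_finset_lt hreg.aleph0_le _ _ fun x _ => hsmall x
  obtain ⟨k, hks, hkM⟩ : (s \ (M ∪ N)).Nonempty := by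
    refine sdiff_nonempty.2 fun hsub => (hs.trans (mk_le_mk_of_subset hsub)).not_gt ?_
    exact (mk_union_le _ _).trans_lt (add_lt_of_lt hreg.aleph0_le hMsmall hN)
  have hdisj : (insert k M).PairwiseDisjoint d := hM.prop.2.insert fun j hj _ =>
    Finset.disjoint_left.2 fun x hxk hxj =>
      hkM (Or.inr (mem_iUnion.2 ⟨⟨j, hj⟩, mem_iUnion₂.2 ⟨x, hxj, hks, hxk⟩⟩))
  exact hkM (Or.inl (hM.2 ⟨insert_subset hks hM.prop.1, hdisj⟩ (subset_insert k M)
    (mem_insert k M)))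

theorem Cardinal.exists_pairwise_compatible_of_card_le (hreg : mu.IsRegular)
    (v : K → X → Ordinal.{u}) :
    ∀ (n : ℕ) (d : K → Finset X) (s : Set K), mu ≤ #s → (∀ k ∈ s, (d k).card ≤ n) →
      (∀ x, ∃ β < mu.ord, ∀ k ∈ s, x ∈ d k → v k x < β) →
      ∃ S ⊆ s, mu ≤ #S ∧ S.Pairwise fun i j => ∀ x ∈ d i, x ∈ d j → v i x = v j x
  | 0, d, s, hs, hcard, _ => ⟨s, subset_rfl, hs, fun i hi _ _ _ x hx => by
      simp [Finset.card_eq_zero.1 (Nat.le_zero.1 (hcard i hi))] at hx⟩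
  | n + 1, d, s, hs, hcard, hv => by
    classical
    by_cases hbig : ∃ x, mu ≤ #{k | k ∈ s ∧ x ∈ d k}
    · -- shrink to `μ` many members that contain `x` and agree at `x`, then forget `x`
      obtain ⟨x, hx⟩ := hbig
      obtain ⟨β, hβ, hxβ⟩ := hv x
      obtain ⟨γ, hγ⟩ := exists_le_mk_sep_eq_of_lt_ord hreg hx hβ (v · x) fun k hk =>
        hxβ k hk.1 hk.2
      obtain ⟨S, hSs, hS, hcompat⟩ := exists_pairwise_compatible_of_card_le hreg v n
        (fun k => (d k).erase x) _ hγ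
        (fun k hk => by have := hcard k hk.1.1; rw [Finset.card_erase_of_mem hk.1.2]; omega)
        (fun y => (hv y).imp fun β ⟨hβ, h⟩ =>
          ⟨hβ, fun k hk hy => h k hk.1.1 (Finset.mem_of_mem_erase hy)⟩)
      refine ⟨S, fun k hk => (hSs hk).1.1, hS, fun i hi j hj hij y hyi hyj => ?_⟩
      by_cases hyx : y = x
      · rw [hyx, (hSs hi).2, (hSs hj).2]
      · exact hcompat hi hj hij y (Finset.mem_erase.2 ⟨hyx, hyi⟩) (Finset.mem_erase.2 ⟨hyx, hyj⟩)
    · simp only [not_exists, not_le] at hbig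
      obtain ⟨S, hSs, hS, hdisj⟩ := exists_pairwiseDisjoint_of_isRegular hreg hs d hbig
      exact ⟨S, hSs, hS, fun i hi j hj hij x hxi hxj =>
        (Finset.disjoint_left.1 (hdisj hi hj hij) hxi hxj).elim⟩

theorem Cardinal.exists_pairwise_compatible_of_isRegular (hreg : mu.IsRegular) (hunc : ℵ₀ < mu)
    (hK : mu ≤ #K) (d : K → Finset X) (v : K → X → Ordinal.{u})
    (hv : ∀ x, ∃ β < mu.ord, ∀ k, x ∈ d k → v k x < β) :
    ∃ S : Set K, mu ≤ #S ∧ S.Pairwise fun i j => ∀ x ∈ d i, x ∈ d j → v i x = v j x := by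
  obtain ⟨γ, hγ⟩ := exists_le_mk_sep_eq_of_lt_ord hreg (s := Set.univ) (by rwa [mk_univ])
    (by rwa [← ord_aleph0, ord_lt_ord]) (fun k => ((d k).card : Ordinal.{u}))
    fun k _ => Ordinal.natCast_lt_omega0 _
  obtain ⟨⟨k₀, hk₀⟩⟩ := mk_ne_zero_iff.1 (hreg.pos.trans_le hγ).ne'
  obtain ⟨S, -, hS, hcompat⟩ := exists_pairwise_compatible_of_card_le hreg v (d k₀).card d _ hγ
    (fun k hk => (Nat.cast_inj.1 (hk.2.trans hk₀.2.symm)).le)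
    fun x => (hv x).imp fun β ⟨hβ, h⟩ => ⟨hβ, fun k _ => h k⟩
  exact ⟨S, hS, hcompat⟩

end PairwiseCompatible

section ModFilter

variable {I : Type u} {D : Filter I} {A B : Set I}

theorem SubsetMod.mono_left {A' : Set I} (h : SubsetMod D A B) (hA' : A' ⊆ A) :
    SubsetMod D A' B :=
  Filter.mem_of_superset h (compl_subset_compl.2 (sdiff_subset_sdiff_left hA'))

theorem SubsetMod.biInter {ι : Type*} {B : ι → Set I} (F : Finset ι)
    (h : ∀ i ∈ F, SubsetMod D A (B i)) : SubsetMod D A (⋂ i ∈ F, B i) :=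
  Filter.mem_of_superset ((Filter.biInter_finset_mem F).2 h) fun _ ht ⟨htA, htB⟩ =>
    htB (mem_iInter₂.2 fun i hi => by_contra fun htBi => mem_iInter₂.1 ht i hi ⟨htA, htBi⟩)

theorem NonzeroMod.inter_nonempty (hA : NonzeroMod D A) (hAB : SubsetMod D A B) :
    (A ∩ B).Nonempty := by
  by_contra hempty
  exact hA (Filter.mem_of_superset hAB fun t ht htA => ht ⟨htA, fun htB => hempty ⟨t, htA, htB⟩⟩)

theorem NonzeroMod.nonempty (hA : NonzeroMod D A) : A.Nonempty :=
  (hA.inter_nonempty (B := Set.univ) (by simp [SubsetMod, ZeroMod])).mono inter_subset_left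

end ModFilter

namespace PartialAssignment

variable {I : Type u} {G : Set (I → Ordinal.{u})}

theorem exists_mem_dom_aset_subset (p : PartialAssignment I G) {g : I → Ordinal.{u}}
    (hg : g ∈ G) {v : Ordinal.{u}} (hv : v ∈ range g) :
    ∃ q : PartialAssignment I G, g ∈ q.dom ∧ q.Aset ⊆ p.Aset := by
  classical
  by_cases hgp : g ∈ p.dom
  · exact ⟨p, hgp, subset_rfl⟩
  refine ⟨⟨insert g p.dom, ?_, Function.update p.val g v, fun x hx => ?_⟩,
    p.dom.mem_insert_self g, fun t ht x hx => ?_⟩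
  · rw [Finset.coe_insert]
    exact insert_subset hg p.dom_sub
  · rcases eq_or_ne x g with rfl | hxg
    · rwa [Function.update_self]
    · rw [Function.update_of_ne hxg]
      exact p.val_mem x ((Finset.mem_insert.1 hx).resolve_left hxg)
  · have hxg : x ≠ g := ne_of_mem_of_not_mem hx hgp
    simpa [Function.update_of_ne hxg] using ht x (Finset.mem_insert_of_mem hx)

theorem exists_aset_subset_of_pairwise {κ : Type*} (p : κ → PartialAssignment I G)
    (F : Finset κ) (hF : (F : Set κ).Pairwise fun i j =>
      ∀ x ∈ (p i).dom, x ∈ (p j).dom → (p i).val x = (p j).val x) :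
    ∃ q : PartialAssignment I G, ∀ i ∈ F, q.Aset ⊆ (p i).Aset := by
  classical
  let w : (I → Ordinal.{u}) → Ordinal.{u} := fun x =>
    if hx : ∃ i ∈ F, x ∈ (p i).dom then (p hx.choose).val x else 0
  have hw : ∀ i ∈ F, ∀ x ∈ (p i).dom, w x = (p i).val x := by
    intro i hi x hx
    have hx' : ∃ i ∈ F, x ∈ (p i).dom := ⟨i, hi, hx⟩
    obtain ⟨hj, hxj⟩ := hx'.choose_spec
    simp only [w, dif_pos hx']
    rcases eq_or_ne hx'.choose i with hji | hji
    · rw [hji]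
    · exact hF hj hi hji x hxj hx
  refine ⟨⟨F.biUnion fun i => (p i).dom, ?_, w, fun x hx => ?_⟩, fun i hi t ht x hx => ?_⟩
  · simpa only [Finset.coe_biUnion] using iUnion₂_subset fun i _ => (p i).dom_sub
  · obtain ⟨i, hi, hxi⟩ := Finset.mem_biUnion.1 hx
    rw [hw i hi x hxi]
    exact (p i).val_mem x hxi
  · exact (ht x (Finset.mem_biUnion.2 ⟨i, hi, hx⟩)).trans (hw i hi x hx)

end PartialAssignment

section GoodTriple

variable {I : Type u} {D : Filter I} {G : Set (I → Ordinal.{u})}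

theorem exists_aset_subsetMod_of_maximal
    (hmax : ∀ D' : Filter I, (∀ A ∈ D, A ∈ D') → IndependentMod D' G → D' = D)
    {A : Set I} (hA : NonzeroMod D A) : ∃ p : PartialAssignment I G, SubsetMod D p.Aset A := by
  by_contra! hcon
  -- otherwise adding `Aᶜ` to `D` keeps `G` independent
  have hind : IndependentMod (D ⊓ Filter.principal Aᶜ) G := fun p hp =>
    hcon p (Filter.mem_of_superset (Filter.mem_inf_principal.1 hp)
      fun _ ht ⟨htp, htA⟩ => ht htA htp)
  exact hA (hmax _ (fun _ hB => Filter.mem_inf_of_left hB) hind ▸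
    Filter.mem_inf_of_right (Filter.mem_principal_self _))

theorem exists_value_forall_exists_mem_biInter {mu : Cardinal.{u}} (hreg : mu.IsRegular)
    (hunc : ℵ₀ < mu) (hbound : ∀ x ∈ G, ∃ β < mu.ord, ∀ t, x t < β)
    (hind : IndependentMod D G)
    (hmax : ∀ D' : Filter I, (∀ A ∈ D, A ∈ D') → IndependentMod D' G → D' = D)
    {g : I → Ordinal.{u}} (hg : g ∈ G) {K : Type u} (hK : mu ≤ #K) (Y : K → Set I)
    (hY : ∀ k, NonzeroMod D (Y k)) :
    ∃ v, ∀ m : ℕ, ∃ F : Finset K, F.card = m ∧ ∃ t, g t = v ∧ ∀ k ∈ F, t ∈ Y k := by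
  classical
  have hchoice : ∀ k, ∃ q : PartialAssignment I G, g ∈ q.dom ∧ SubsetMod D q.Aset (Y k) := by
    intro k
    obtain ⟨p, hp⟩ := exists_aset_subsetMod_of_maximal hmax (hY k)
    obtain ⟨t₀, -⟩ := (hind p).nonempty
    obtain ⟨q, hgq, hqp⟩ := p.exists_mem_dom_aset_subset hg (mem_range_self t₀)
    exact ⟨q, hgq, hp.mono_left hqp⟩
  choose p hgp hpY using hchoice
  have hval : ∀ x, ∃ β < mu.ord, ∀ k, x ∈ (p k).dom → (p k).val x < β := by
    intro x
    by_cases hx : x ∈ G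
    · obtain ⟨β, hβ, hxβ⟩ := hbound x hx
      refine ⟨β, hβ, fun k hxk => ?_⟩
      obtain ⟨t, ht⟩ := (p k).val_mem x hxk
      exact ht ▸ hxβ t
    · exact ⟨0, ord_pos.2 hreg.pos, fun k hxk => (hx ((p k).dom_sub hxk)).elim⟩
  obtain ⟨S, hS, hcompat⟩ := exists_pairwise_compatible_of_isRegular hreg hunc hK
    (fun k => (p k).dom) (fun k => (p k).val) hval
  have hSinf : S.Infinite := infinite_coe_iff.1 (infinite_iff.2 (hreg.aleph0_le.trans hS))
  obtain ⟨k₀, hk₀⟩ := hSinf.nonempty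
  refine ⟨(p k₀).val g, fun m => ?_⟩
  obtain ⟨F, hFS, hFcard⟩ := hSinf.exists_subset_card_eq m
  have hF₀S : (↑(insert k₀ F) : Set K) ⊆ S := by
    rw [Finset.coe_insert]
    exact insert_subset hk₀ hFS
  obtain ⟨q, hq⟩ := PartialAssignment.exists_aset_subset_of_pairwise p _ (hcompat.mono hF₀S)
  obtain ⟨t, htq, htY⟩ := (hind q).inter_nonempty
    (SubsetMod.biInter _ fun k hk => (hpY k).mono_left (hq k hk))
  refine ⟨F, hFcard, t, hq k₀ (F.mem_insert_self k₀) htq g (hgp k₀), fun k hk => ?_⟩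
  exact mem_iInter₂.1 htY k (Finset.mem_insert_of_mem hk)

theorem exists_value_forall_natCast_le_mk {mu : Cardinal.{u}} (hreg : mu.IsRegular)
    (hunc : ℵ₀ < mu) (hbound : ∀ x ∈ G, ∃ β < mu.ord, ∀ t, x t < β)
    (hind : IndependentMod D G)
    (hmax : ∀ D' : Filter I, (∀ A ∈ D, A ∈ D') → IndependentMod D' G → D' = D)
    {g : I → Ordinal.{u}} (hg : g ∈ G) (X : Ordinal.{u} → Set I)
    (hX : ∀ α < mu.ord, NonzeroMod D (X α)) :
    ∃ v, ∀ m : ℕ, ∃ t, g t = v ∧ (m : Cardinal) ≤ #{α : Ordinal.{u} // α < mu.ord ∧ t ∈ X α} := by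
  let ι : mu.ord.ToType → Ordinal.{u} := fun k => (Ordinal.ToType.mk.symm k).1
  have hι : ι.Injective := fun _ _ h => Ordinal.ToType.mk.symm.injective (Subtype.ext h)
  obtain ⟨v, hv⟩ := exists_value_forall_exists_mem_biInter hreg hunc hbound hind hmax hg
    (by rw [mk_toType, card_ord]) (X ∘ ι) fun k => hX _ (Ordinal.ToType.mk.symm k).2
  refine ⟨v, fun m => ?_⟩
  obtain ⟨F, hFcard, t, ht, htX⟩ := hv m
  refine ⟨t, ht, ?_⟩
  have hsub : (F.image ι : Set Ordinal.{u}) ⊆ {α | α < mu.ord ∧ t ∈ X α} := by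
    rw [Finset.coe_image]
    rintro _ ⟨k, hk, rfl⟩
    exact ⟨(Ordinal.ToType.mk.symm k).2, htX k hk⟩
  calc (m : Cardinal) = #(F.image ι : Set Ordinal.{u}) := by
        simp [Finset.card_image_of_injective F hι, hFcard]
    _ ≤ _ := mk_le_mk_of_subset hsub

end GoodTriple

theorem eq_of_apply_eq_of_natCast {I : Type u} {g : I → Ordinal.{u}} {f : I → ℕ}
    (h₁ : ∀ s : I, ∀ n : ℕ, g s = n → f s = n) (h₂ : ∀ s : I, (¬ ∃ n : ℕ, g s = n) → f s = 0)
    {s s' : I} (h : g s = g s') : f s = f s' := by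
  by_cases hs : ∃ n : ℕ, g s = n
  · obtain ⟨n, hn⟩ := hs
    rw [h₁ s n hn, h₁ s' n (h ▸ hn)]
  · rw [h₂ s hs, h₂ s' (h ▸ hs)]

theorem good_triple_prevents_flexibility_below_general {I : Type u} (mu : Cardinal.{u})
    (hmureg : mu.IsRegular)
    (D : Filter I)
    (G : Set (I → Ordinal.{u}))
    (hranges : ∀ g ∈ G, ∃ β : Ordinal.{u}, β < mu.ord ∧ Set.range g = Set.Iio β)
    (hind : IndependentMod D G)
    (hmax : ∀ D' : Filter I, (∀ A ∈ D, A ∈ D') → IndependentMod D' G → D' = D)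
    (g : I → Ordinal.{u}) (hg : g ∈ G)
    (hrange : ∀ n : ℕ, (n : Ordinal.{u}) ∈ Set.range g)
    (gstar : I → ℕ)
    (hgstar₁ : ∀ s : I, ∀ n : ℕ, g s = (n : Ordinal.{u}) → gstar s = n)
    (hgstar₂ : ∀ s : I, (¬ ∃ n : ℕ, g s = (n : Ordinal.{u})) → gstar s = 0)
    (Dstar : Ultrafilter I)
    (hext : ∀ A ∈ D, A ∈ Dstar)
    (hext2 : ∀ n : ℕ, {s : I | n < gstar s} ∈ Dstar) :
    IsNonstandard (Dstar : Filter I) gstar ∧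
    (¬ ∃ X : Ordinal.{u} → Set I,
        (∀ α, α < mu.ord → X α ∈ Dstar) ∧
        ∀ t : I, #{α : Ordinal.{u} // α < mu.ord ∧ t ∈ X α} ≤ (gstar t : Cardinal)) ∧
    ¬ IsFlexible mu (Dstar : Filter I) := by
  have hbelow : ¬ ∃ X : Ordinal.{u} → Set I, (∀ α, α < mu.ord → X α ∈ Dstar) ∧
      ∀ t : I, #{α : Ordinal.{u} // α < mu.ord ∧ t ∈ X α} ≤ (gstar t : Cardinal) := by
    rintro ⟨X, hXD, hXcard⟩
    have hbound : ∀ x ∈ G, ∃ β < mu.ord, ∀ t, x t < β := fun x hx =>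
      (hranges x hx).imp fun β ⟨hβ, hxβ⟩ =>
        ⟨hβ, fun t => show x t ∈ Iio β from hxβ ▸ mem_range_self t⟩
    have hunc : ℵ₀ < mu := by
      obtain ⟨β, hβ, hgβ⟩ := hranges g hg
      rw [← ord_lt_ord, ord_aleph0]
      refine (Ordinal.omega0_le.2 fun n => ?_).trans_lt hβ
      exact (show (n : Ordinal) ∈ Iio β from hgβ ▸ hrange n).le
    obtain ⟨v, hv⟩ := exists_value_forall_natCast_le_mk hmureg hunc hbound hind hmax hg X
      fun α hα hXα => Ultrafilter.compl_notMem_iff.2 (hXD α hα) (hext _ hXα)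
    obtain ⟨t₀, ht₀, -⟩ := hv 0
    obtain ⟨t, ht, hcard⟩ := hv (gstar t₀ + 1)
    have hgt : gstar t = gstar t₀ := eq_of_apply_eq_of_natCast hgstar₁ hgstar₂ (ht.trans ht₀.symm)
    have hcount := hcard.trans (hXcard t)
    rw [hgt, Nat.cast_le] at hcount
    omega
  refine ⟨hext2, hbelow, fun hflex => ?_⟩
  obtain ⟨X, hXD, hXcard⟩ := hflex gstar hext2
  exact hbelow ⟨X, hXD, hXcard⟩

/-- the `(lam, <mu)` version: if the independent family has all ranges ordinals
`< mu`, `mu` regular, then no subsequent ultrafilter is `mu`-flexible, witnessed by `g*`. -/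
theorem good_triple_prevents_flexibility_below {I : Type u} (lam mu : Cardinal.{u})
    (hml : mu ≤ lam) (hmureg : mu.IsRegular) (hI : #I = lam)
    (D : Filter I) (hreg : IsRegularFilter lam D)
    (G : Set (I → Ordinal.{u}))
    (hranges : ∀ g ∈ G, ∃ β : Ordinal.{u}, β < mu.ord ∧ Set.range g = Set.Iio β)
    (hind : IndependentMod D G)
    (hmax : ∀ D' : Filter I, (∀ A ∈ D, A ∈ D') → IndependentMod D' G → D' = D)
    (g : I → Ordinal.{u}) (hg : g ∈ G)
    (hrange : ∀ n : ℕ, (n : Ordinal.{u}) ∈ Set.range g)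
    (gstar : I → ℕ)
    (hgstar₁ : ∀ s : I, ∀ n : ℕ, g s = (n : Ordinal.{u}) → gstar s = n)
    (hgstar₂ : ∀ s : I, (¬ ∃ n : ℕ, g s = (n : Ordinal.{u})) → gstar s = 0)
    (Dstar : Ultrafilter I)
    (hext : ∀ A ∈ D, A ∈ Dstar)
    (hext2 : ∀ n : ℕ, {s : I | n < gstar s} ∈ Dstar) :
    IsNonstandard (Dstar : Filter I) gstar ∧
    (¬ ∃ X : Ordinal.{u} → Set I,
        (∀ α, α < mu.ord → X α ∈ Dstar) ∧
        ∀ t : I, #{α : Ordinal.{u} // α < mu.ord ∧ t ∈ X α} ≤ (gstar t : Cardinal)) ∧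
    ¬ IsFlexible mu (Dstar : Filter I) :=
  good_triple_prevents_flexibility_below_general mu hmureg D G hranges hind hmax g hg hrange gstar
    hgstar₁ hgstar₂ Dstar hext hext2
end

section
/- Let D be a filter on I, μ a cardinal, and G a family of functions from I to μ which is independent mod D and such that for every g ∈ G the sequence ⟨g⁻¹({ε}) : ε < μ⟩ is a maximal antichain of P(I) mod D. Let g ∈ G and let g' : I → μ satisfy {t ∈ I : g'(t) = ε} = ∅ mod D for every ε < μ. Then {t ∈ I : g(t) = g'(t)} = ∅ mod D; consequently, for every ultrafilter D* extending D, {t ∈ I : g(t) = g'(t)} ∉ D*. -/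
open Cardinal Set

universe u

theorem ZeroMod.mono {I : Type u} {D : Filter I} {A B : Set I} (hB : ZeroMod D B) (hAB : A ⊆ B) :
    ZeroMod D A :=
  Filter.mem_of_superset hB (compl_subset_compl.mpr hAB)

theorem ZeroMod.notMem_ultrafilter {I : Type u} {D : Filter I} {A : Set I} (hA : ZeroMod D A)
    {Dstar : Ultrafilter I} (hD : ∀ B ∈ D, B ∈ Dstar) : A ∉ Dstar :=
  Ultrafilter.compl_mem_iff_notMem.mp (hD _ hA)

theorem zeroMod_of_zeroMod_inter_of_covers {I : Type u} {ι : Type*} {D : Filter I}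
    {P : ι → Prop} {A : ι → Set I}
    (hcover : ∀ X : Set I, NonzeroMod D X → ∃ ε, P ε ∧ NonzeroMod D (X ∩ A ε))
    {X : Set I} (hX : ∀ ε, P ε → ZeroMod D (X ∩ A ε)) : ZeroMod D X := by
  by_contra hXne
  obtain ⟨ε, hε, hne⟩ := hcover X hXne
  exact hne (hX ε hε)

theorem distinct_from_independent_function_general {I : Type u} (mu : Cardinal.{u})
    (D : Filter I) (G : Set (I → Ordinal.{u}))
    (hpart : ∀ g ∈ G,
      (∀ ε, ε < mu.ord → NonzeroMod D (g ⁻¹' {ε})) ∧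
      (∀ ε ζ, ε < mu.ord → ζ < mu.ord → ε ≠ ζ → ZeroMod D (g ⁻¹' {ε} ∩ g ⁻¹' {ζ})) ∧
      (∀ X : Set I, NonzeroMod D X → ∃ ε, ε < mu.ord ∧ NonzeroMod D (X ∩ g ⁻¹' {ε})))
    (g : I → Ordinal.{u}) (hg : g ∈ G)
    (g' : I → Ordinal.{u})
    (hz : ∀ ε, ε < mu.ord → ZeroMod D {t : I | g' t = ε}) :
    ZeroMod D {t : I | g t = g' t} ∧
    ∀ Dstar : Ultrafilter I, (∀ A ∈ D, A ∈ Dstar) → {t : I | g t = g' t} ∉ Dstar := by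
  have hzero : ZeroMod D {t : I | g t = g' t} := by
    refine zeroMod_of_zeroMod_inter_of_covers (hpart g hg).2.2 fun ε hε => ?_
    refine (hz ε hε).mono ?_
    rintro t ⟨heq, hgt⟩
    exact heq.symm.trans hgt
  exact ⟨hzero, fun _ hD => hzero.notMem_ultrafilter hD⟩

/-- if each `g ∈ G` induces a maximal antichain of `P(I) mod D` and `g'` is
everywhere-different mod `D` from each constant `ε < mu`, then `g' ≠ g mod D`, and hence
modulo every ultrafilter extending `D`. -/
theorem distinct_from_independent_function {I : Type u} (mu : Cardinal.{u})
    (D : Filter I) (G : Set (I → Ordinal.{u}))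
    (hG : ∀ g ∈ G, ∀ t : I, g t < mu.ord)
    (hind : IndependentMod D G)
    (hpart : ∀ g ∈ G,
      (∀ ε, ε < mu.ord → NonzeroMod D (g ⁻¹' {ε})) ∧
      (∀ ε ζ, ε < mu.ord → ζ < mu.ord → ε ≠ ζ → ZeroMod D (g ⁻¹' {ε} ∩ g ⁻¹' {ζ})) ∧
      (∀ X : Set I, NonzeroMod D X → ∃ ε, ε < mu.ord ∧ NonzeroMod D (X ∩ g ⁻¹' {ε})))
    (g : I → Ordinal.{u}) (hg : g ∈ G)
    (g' : I → Ordinal.{u}) (hg' : ∀ t : I, g' t < mu.ord)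
    (hz : ∀ ε, ε < mu.ord → ZeroMod D {t : I | g' t = ε}) :
    ZeroMod D {t : I | g t = g' t} ∧
    ∀ Dstar : Ultrafilter I, (∀ A ∈ D, A ∈ Dstar) → {t : I | g t = g' t} ∉ Dstar :=
  distinct_from_independent_function_general mu D G hpart g hg g' hz
end

section
/- Let I be a set of cardinality at least λ, B a Boolean algebra, h : P(I) → B a surjective Boolean algebra homomorphism such that D = h⁻¹({1_B}) is a λ-regular filter on I, and E an ultrafilter on B. Then Fil(h, E) = {A ⊆ I : h(A) ∈ E} is a λ-regular ultrafilter on I. -/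
open Cardinal Set

universe u

/-!
`{A | h A ∈ E}` is a filter because `h` preserves `⊓` and `⊤`, and it is an ultrafilter because a
maximal proper filter of a Boolean algebra contains `a` or `aᶜ`. It contains `D = h⁻¹(⊤)`, and a
filter finer than a `lam`-regular filter is `lam`-regular with the same witnessing family.
-/

section BAUltrafilter

variable {B : Type u} [BooleanAlgebra B] {E : Set B}

theorem IsBAFilter.adjoin (hE : IsBAFilter E) (a : B) :
    IsBAFilter {b | ∃ e ∈ E, e ⊓ a ≤ b} := by
  obtain ⟨htop, -, hinf⟩ := hE
  refine ⟨⟨⊤, htop, le_top⟩, fun b c ⟨e, he, hb⟩ hbc => ⟨e, he, hb.trans hbc⟩, ?_⟩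
  rintro b c ⟨e, he, hb⟩ ⟨e', he', hc⟩
  exact ⟨e ⊓ e', hinf e e' he he', le_inf ((inf_le_inf_right a inf_le_left).trans hb)
    ((inf_le_inf_right a inf_le_right).trans hc)⟩

/-- If `a ∉ E`, adjoining `aᶜ` to `E` gives a proper filter, which by maximality is `E`. -/
theorem IsBAUltrafilter.compl_mem_of_notMem (hE : IsBAUltrafilter E) {a : B} (ha : a ∉ E) :
    aᶜ ∈ E := by
  obtain ⟨hfilter, -, hmax⟩ := hE
  have hproper : ⊥ ∉ {b | ∃ e ∈ E, e ⊓ aᶜ ≤ b} := by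
    rintro ⟨e, he, hle⟩
    exact ha (hfilter.2.1 e a he (disjoint_compl_right_iff.1 (disjoint_iff_inf_le.2 hle)))
  rw [← hmax _ (hfilter.adjoin aᶜ) hproper fun e he => ⟨e, he, inf_le_left⟩]
  exact ⟨⊤, hfilter.1, by rw [top_inf_eq]⟩

theorem IsBAUltrafilter.compl_mem_iff (hE : IsBAUltrafilter E) {a : B} : aᶜ ∈ E ↔ a ∉ E :=
  ⟨fun hac ha => hE.2.1 (inf_compl_eq_bot (a := a) ▸ hE.1.2.2 a aᶜ ha hac),
    hE.compl_mem_of_notMem⟩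

end BAUltrafilter

theorem exists_ultrafilter_mem_iff_map_mem {I : Type u} {B : Type u} [BooleanAlgebra B]
    (h : Set I → B) (hinf : ∀ A C : Set I, h (A ∩ C) = h A ⊓ h C)
    (hcompl : ∀ A : Set I, h Aᶜ = (h A)ᶜ) (htop : h univ = ⊤)
    {E : Set B} (hE : IsBAUltrafilter E) :
    ∃ U : Ultrafilter I, ∀ A : Set I, A ∈ U ↔ h A ∈ E := by
  have hmono : Monotone h := fun A C hAC =>
    inf_eq_left.1 (by rw [← hinf, inter_eq_left.2 hAC])
  let F : Filter I :=
    { sets := {A | h A ∈ E}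
      univ_sets := by rw [mem_ofPred_eq, htop]; exact hE.1.1
      sets_of_superset := fun hA hAC => hE.1.2.1 _ _ hA (hmono hAC)
      inter_sets := fun {A C} hA hC => by
        rw [mem_ofPred_eq, hinf]; exact hE.1.2.2 _ _ hA hC }
  refine ⟨Ultrafilter.ofComplNotMemIff F fun A => ?_, fun A => Iff.rfl⟩
  change h Aᶜ ∉ E ↔ h A ∈ E
  rw [hcompl, hE.compl_mem_iff, not_not]

theorem IsRegularFilter.mono {I : Type u} {lam : Cardinal.{u}} {D F : Filter I}
    (hD : IsRegularFilter lam D) (hFD : F ≤ D) : IsRegularFilter lam F :=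
  let ⟨X, hXmem, hXfin⟩ := hD
  ⟨X, fun i hi => hFD (hXmem i hi), hXfin⟩

theorem induced_ultrafilter_regular_general {I : Type u} {B : Type u} [BooleanAlgebra B]
    (lam : Cardinal.{u})
    (h : Set I → B)
    (hinf : ∀ A C : Set I, h (A ∩ C) = h A ⊓ h C)
    (hcompl : ∀ A : Set I, h Aᶜ = (h A)ᶜ)
    (htop : h Set.univ = ⊤)
    (D : Filter I) (hD : ∀ A : Set I, A ∈ D ↔ h A = ⊤)
    (hreg : IsRegularFilter lam D)
    (E : Set B) (hE : IsBAUltrafilter E) :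
    ∃ U : Ultrafilter I, (∀ A : Set I, A ∈ U ↔ h A ∈ E) ∧
      IsRegularFilter lam (U : Filter I) := by
  obtain ⟨U, hU⟩ := exists_ultrafilter_mem_iff_map_mem h hinf hcompl htop hE
  refine ⟨U, hU, hreg.mono fun A hA => ?_⟩
  rw [Ultrafilter.mem_coe, hU, (hD A).1 hA]
  exact hE.1.1

/-- if `h : P(I) → B` is a surjective Boolean homomorphism with `h⁻¹(1) = D`
a `lam`-regular filter and `E` is an ultrafilter on `B`, then `{A : h A ∈ E}` is a
`lam`-regular ultrafilter on `I`. -/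
theorem induced_ultrafilter_regular {I : Type u} {B : Type u} [BooleanAlgebra B]
    (lam : Cardinal.{u}) (hI : lam ≤ #I)
    (h : Set I → B) (hsurj : Function.Surjective h)
    (hsup : ∀ A C : Set I, h (A ∪ C) = h A ⊔ h C)
    (hinf : ∀ A C : Set I, h (A ∩ C) = h A ⊓ h C)
    (hcompl : ∀ A : Set I, h Aᶜ = (h A)ᶜ)
    (htop : h Set.univ = ⊤) (hbot : h ∅ = ⊥)
    (D : Filter I) (hD : ∀ A : Set I, A ∈ D ↔ h A = ⊤)
    (hreg : IsRegularFilter lam D)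
    (E : Set B) (hE : IsBAUltrafilter E) :
    ∃ U : Ultrafilter I, (∀ A : Set I, A ∈ U ↔ h A ∈ E) ∧
      IsRegularFilter lam (U : Filter I) :=
  induced_ultrafilter_regular_general lam h hinf hcompl htop D hD hreg E hE
end
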